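/- Let n ≥ 2, let λ be a Borel probability measure on ℝ^n, let (λ_i)_{i∈I} be a pure decomposition of λ, and for each i let W_i be the linear span of supp λ_i. Suppose that for every i ∈ I there exists d_i ∈ ℕ such that the d_i-fold convolution power λ_i^{d_i} is absolutely continuous with respect to Lebesgue (Haar) measure on the subspace W_i. Then every affine subspace A of ℝ^n with λ(A) > 0 is a vector subspace of ℝ^n. -/

import Mathlib

open MeasureTheory

/-- The (topological) support of a measure. -/
def msupp {X : Type*} [TopologicalSpace X] [MeasurableSpace X] (μ : Measure X) : Set X :=
  {x | ∀ U : Set X, IsOpen U → x ∈ U → 0 < μ U}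

/-- A nonzero finite Borel measure on `ℝ^d` is *pure* if every vector subspace of
positive measure contains the linear span of its support. -/
def IsPure {d : ℕ} (μ : Measure (Fin d → ℝ)) : Prop :=
  μ ≠ 0 ∧ IsFiniteMeasure μ ∧
    ∀ W : Submodule ℝ (Fin d → ℝ), 0 < μ (W : Set (Fin d → ℝ)) →
      Submodule.span ℝ (msupp μ) ≤ W

/-- A *pure decomposition* of a finite Borel measure `μ` on `ℝ^d`. -/
def IsPureDecomp {d : ℕ} {ι : Type*} (μ : Measure (Fin d → ℝ))
    (f : ι → Measure (Fin d → ℝ)) : Prop :=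
  Countable ι ∧ (∀ i, IsPure (f i)) ∧
    (∀ i j : ι, i ≠ j →
      Submodule.span ℝ (msupp (f i)) ≠ Submodule.span ℝ (msupp (f j))) ∧
    μ = Measure.sum f

/-- `n`-fold convolution power of a measure on an additive monoid. -/
noncomputable def addConvPow {V : Type*} [AddMonoid V] [MeasurableSpace V]
    (μ : Measure V) : ℕ → Measure V
  | 0 => Measure.dirac 0
  | n + 1 => ((μ.prod (addConvPow μ n)).map fun p : V × V => p.1 + p.2)

/-- Lebesgue (Haar) measure of a subspace `W ⊆ ℝ^n`, viewed as a measure on `ℝ^n`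
supported on `W`. -/
noncomputable def subspaceHaar {n : ℕ} (W : Submodule ℝ (Fin n → ℝ)) :
    Measure (Fin n → ℝ) :=
  (MeasureTheory.Measure.addHaar : Measure W).map Subtype.val

/-!
Only one component `μ = λ_i` with `μ(A) > 0` matters. Since `μ` lives on `W = span (supp μ)`,
there is `a ∈ A ∩ W` with `μ(a + U) > 0`, where `U = dir A ⊓ W`. Convolving `d` times gives
`μ^d(d • a + U) ≥ μ(a + U)^d > 0`, so by absolute continuity the coset `d • a + U` of `U` in `W`
has positive Lebesgue measure on `W`; hence `U = W`. Then `a ∈ W ≤ dir A`, so `0 = -a + a ∈ A`.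
-/

lemma msupp_eq_support {X : Type*} [TopologicalSpace X] [MeasurableSpace X] (μ : Measure X) :
    msupp μ = μ.support := by
  simp only [msupp, Measure.support_eq_forall_isOpen]
  grind

lemma measure_compl_span_msupp {n : ℕ} (μ : Measure (Fin n → ℝ)) :
    μ (Submodule.span ℝ (msupp μ) : Set (Fin n → ℝ))ᶜ = 0 :=
  measure_mono_null (Set.compl_subset_compl.2 Submodule.subset_span)
    (msupp_eq_support μ ▸ Measure.measure_compl_support)

section AddConvPow

variable {V : Type*} [AddCommGroup V] [MeasurableSpace V] [MeasurableAdd₂ V]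

instance addConvPow.instSFinite (μ : Measure V) [SFinite μ] : ∀ d, SFinite (addConvPow μ d)
  | 0 => by rw [addConvPow]; infer_instance
  | d + 1 => by
      have := addConvPow.instSFinite μ d
      rw [addConvPow]
      infer_instance

/-- The `d`-fold sum of points of `a + U` lies in `d • a + U`. -/
lemma pow_measure_coset_le_addConvPow (μ : Measure V) [SFinite μ] (U : AddSubgroup V) (a : V) :
    ∀ d : ℕ, μ {x | x - a ∈ U} ^ d ≤ addConvPow μ d {x | x - d • a ∈ U}
  | 0 => by simp [addConvPow, Measure.dirac_apply_of_mem, U.zero_mem]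
  | d + 1 => by
      have hsum : {x | x - a ∈ U} ×ˢ {x | x - d • a ∈ U} ⊆
          (fun p : V × V => p.1 + p.2) ⁻¹' {x | x - (d + 1) • a ∈ U} := by
        rintro ⟨x, y⟩ ⟨hx, hy⟩
        have hxy : x + y - (d + 1) • a = (x - a) + (y - d • a) := by
          rw [succ_nsmul']
          abel
        simpa [hxy] using U.add_mem hx hy
      calc μ {x | x - a ∈ U} ^ (d + 1)
          = μ {x | x - a ∈ U} * μ {x | x - a ∈ U} ^ d := pow_succ' _ _
        _ ≤ μ {x | x - a ∈ U} * addConvPow μ d {x | x - d • a ∈ U} :=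
            mul_le_mul_right (pow_measure_coset_le_addConvPow μ U a d) _
        _ = μ.prod (addConvPow μ d) ({x | x - a ∈ U} ×ˢ {x | x - d • a ∈ U}) :=
            (Measure.prod_prod _ _).symm
        _ ≤ μ.prod (addConvPow μ d) ((fun p : V × V => p.1 + p.2) ⁻¹' _) := measure_mono hsum
        _ ≤ addConvPow μ (d + 1) {x | x - (d + 1) • a ∈ U} :=
            Measure.le_map_apply measurable_add.aemeasurable _

end AddConvPow

lemma subspaceHaar_coset_eq_zero {n : ℕ} {W U : Submodule ℝ (Fin n → ℝ)} {b : Fin n → ℝ}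
    (hb : b ∈ W) (hWU : ¬ W ≤ U) : subspaceHaar W {x | x - b ∈ U} = 0 := by
  have hmeas : MeasurableSet {x : Fin n → ℝ | x - b ∈ U} :=
    U.closed_of_finiteDimensional.measurableSet.preimage (measurable_id.sub_const b)
  have hcoset : (Subtype.val ⁻¹' {x | x - b ∈ U} : Set W) =
      AffineSubspace.mk' (⟨b, hb⟩ : W) (U.comap W.subtype) := by
    ext x
    simp only [Set.mem_preimage, Set.mem_ofPred_eq, SetLike.mem_coe, AffineSubspace.mem_mk',
      vsub_eq_sub, Submodule.mem_comap]
    rfl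
  rw [subspaceHaar, Measure.map_apply measurable_subtype_coe hmeas, hcoset]
  refine Measure.addHaar_affineSubspace _ _ fun htop => hWU ?_
  rw [← Submodule.comap_subtype_eq_top,
    ← AffineSubspace.direction_mk' (⟨b, hb⟩ : W) (U.comap W.subtype), htop,
    AffineSubspace.direction_top]

lemma zero_mem_of_addConvPow_absolutelyContinuous {n : ℕ} (μ : Measure (Fin n → ℝ)) [SFinite μ]
    {d : ℕ} (hac : addConvPow μ d ≪ subspaceHaar (Submodule.span ℝ (msupp μ)))
    {A : AffineSubspace ℝ (Fin n → ℝ)} (hA : μ A ≠ 0) : (0 : Fin n → ℝ) ∈ A := by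
  set W := Submodule.span ℝ (msupp μ)
  have hAW : μ ((A : Set (Fin n → ℝ)) ∩ W) ≠ 0 := by
    rwa [measure_inter_conull (measure_compl_span_msupp μ)]
  obtain ⟨a, haA, haW⟩ := nonempty_of_measure_ne_zero hAW
  set U := A.direction ⊓ W
  have hcoset : μ {x | x - a ∈ U.toAddSubgroup} ≠ 0 := by
    refine fun h => hAW (measure_mono_null ?_ h)
    rintro x ⟨hxA, hxW⟩
    exact ⟨AffineSubspace.vsub_mem_direction hxA haA, W.sub_mem hxW haW⟩
  have hWU : W ≤ U := by
    by_contra hWU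
    have hnull := hac (subspaceHaar_coset_eq_zero (W.nsmul_mem haW d) hWU)
    exact pow_ne_zero d hcoset <| le_zero_iff.1 <|
      (pow_measure_coset_le_addConvPow μ U.toAddSubgroup a d).trans_eq hnull
  have haV : a ∈ A.direction := (hWU haW).1
  simpa using AffineSubspace.vadd_mem_of_mem_direction (A.direction.neg_mem haV) haA

lemma AffineSubspace.coe_eq_direction_of_zero_mem {k V : Type*} [Ring k] [AddCommGroup V]
    [Module k V] {A : AffineSubspace k V} (h0 : (0 : V) ∈ A) : (A : Set V) = A.direction := by
  simpa using (A.coe_direction_eq_vsub_set_right h0).symm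

theorem stmt5_general (n : ℕ)
    (lam : Measure (Fin n → ℝ))
    (ι : Type) (f : ι → Measure (Fin n → ℝ)) (hdec : IsPureDecomp lam f)
    (hac : ∀ i : ι, ∃ d : ℕ,
      addConvPow (f i) d ≪ subspaceHaar (Submodule.span ℝ (msupp (f i))))
    (A : AffineSubspace ℝ (Fin n → ℝ)) (hA : 0 < lam (A : Set (Fin n → ℝ))) :
    (0 : Fin n → ℝ) ∈ A ∧ ∃ W : Submodule ℝ (Fin n → ℝ), (A : Set (Fin n → ℝ)) = W := by
  obtain ⟨-, hpure, -, rfl⟩ := hdec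
  rw [Measure.sum_apply _ A.closed_of_finiteDimensional.measurableSet] at hA
  obtain ⟨i, hi⟩ : ∃ i, f i A ≠ 0 := by
    by_contra! h
    simp [h] at hA
  have := (hpure i).2.1
  obtain ⟨d, hd⟩ := hac i
  have h0 := zero_mem_of_addConvPow_absolutelyContinuous (f i) hd hi
  exact ⟨h0, A.direction, AffineSubspace.coe_eq_direction_of_zero_mem h0⟩

/-- Let `lam` be a Borel probability measure on `ℝ^n` (`n ≥ 2`) with a
pure decomposition `(f i)`, each component of which has some convolution power
absolutely continuous with respect to the Lebesgue measure on the span of its support.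
Then every affine subspace of positive `lam`-measure is a vector subspace. -/
theorem stmt5 (n : ℕ) (hn : 2 ≤ n)
    (lam : Measure (Fin n → ℝ)) [IsProbabilityMeasure lam]
    (ι : Type) (f : ι → Measure (Fin n → ℝ)) (hdec : IsPureDecomp lam f)
    (hac : ∀ i : ι, ∃ d : ℕ,
      addConvPow (f i) d ≪ subspaceHaar (Submodule.span ℝ (msupp (f i))))
    (A : AffineSubspace ℝ (Fin n → ℝ)) (hA : 0 < lam (A : Set (Fin n → ℝ))) :
    (0 : Fin n → ℝ) ∈ A ∧ ∃ W : Submodule ℝ (Fin n → ℝ), (A : Set (Fin n → ℝ)) = W :=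
  stmt5_general n lam ι f hdec hac A hA
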